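/- Let K be a nonarchimedean local field with residue field of cardinality q, and fix positive integers N, M, d. Given η ∈ (0,1), there exists R > 1, depending only on N, M, d, η and K, such that whenever B₀ ⊆ B are two balls in K^N of radii r₀ and r respectively with r₀ ≥ η·r, one has sup_{t ∈ B} |F(t)| ≤ R · sup_{t ∈ B₀} |F(t)| for every polynomial map F : K^N → K^M of degree at most d. -/

import Mathlib

open Metric

/-- `F : K^N → K^M` is a polynomial map of (total) degree at most `d`: each of its `M`
coordinate functions is given by a polynomial in `N` variables over `K` of total degree
at most `d`. -/
def IsPolyMapOfDeg (K : Type*) [Field K] (N M d : ℕ)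
    (F : (Fin N → K) → (Fin M → K)) : Prop :=
  ∃ P : Fin M → MvPolynomial (Fin N) K,
    (∀ i, (P i).totalDegree ≤ d) ∧ ∀ t i, F t i = MvPolynomial.eval t (P i)

/-!
Tuples of polynomials of degree `≤ d` form a finite-dimensional space on which, for every
`ρ > 0`, the supremum of `‖(P i (t))ᵢ‖` over the ball `‖t‖ ≤ ρ` is a norm, because a polynomial
vanishing on a ball is zero. Norms on a finite-dimensional space over a complete field are
equivalent, so the supremum over the unit ball is at most `C` times the supremum over the
`ρ`-ball. Given `B₀ ⊆ B`, the substitution `u ↦ c₀ + a • u` with `2r ≤ ‖a‖ < 2r‖ξ‖` (where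
`1 < ‖ξ‖`) maps the unit ball onto a ball containing `B` and, for `ρ = η / (2‖ξ‖)`, the `ρ`-ball
into `B₀`; it does not raise degrees, so the same `C` serves for all pairs of balls.
-/

theorem Seminorm.exists_le_mul_of_finiteDimensional {𝕜 E : Type*} [NontriviallyNormedField 𝕜]
    [CompleteSpace 𝕜] [AddCommGroup E] [Module 𝕜 E] [FiniteDimensional 𝕜 E]
    (p q : Seminorm 𝕜 E) (hq : ∀ x, q x = 0 → x = 0) : ∃ C, 0 ≤ C ∧ ∀ x, p x ≤ C * q x := by
  let _ : NormedAddCommGroup E :=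
    AddGroupNorm.toNormedAddCommGroup { q.toAddGroupSeminorm with eq_zero_of_map_eq_zero' := hq }
  let _ : NormedSpace 𝕜 E := ⟨fun a x => (map_smul_eq_mul q a x).le⟩
  -- coordinates in a basis are continuous for the norm `q`
  let b := Module.finBasis 𝕜 E
  let e := b.equivFunL.toContinuousLinearMap
  refine ⟨‖e‖ * ∑ i, p (b i), by positivity, fun x => ?_⟩
  have hcoord : ∀ i, ‖b.equivFun x i‖ ≤ ‖e‖ * q x := fun i =>
    (norm_le_pi_norm (e x) i).trans (e.le_opNorm x)
  calc p x = p (∑ i, b.equivFun x i • b i) := by rw [b.sum_equivFun]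
    _ ≤ ∑ i, ‖b.equivFun x i‖ * p (b i) := by
        refine (Finset.le_sum_of_subadditive p (map_zero p).le (map_add_le_add p) _ _).trans ?_
        simp only [map_smul_eq_mul, le_refl]
    _ ≤ ∑ i, ‖e‖ * q x * p (b i) := by gcongr with i; exact hcoord i
    _ = ‖e‖ * (∑ i, p (b i)) * q x := by
        rw [Finset.mul_sum, Finset.sum_mul]; exact Finset.sum_congr rfl fun i _ => by ring

theorem le_biSup_of_bddAbove_image {α β : Type*} [ConditionallyCompleteLattice α] {f : β → α}
    {s : Set β} (hf : BddAbove (f '' s)) {b : β} (hb : b ∈ s) : f b ≤ ⨆ x ∈ s, f x :=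
  le_ciSup₂ (f := fun x (_ : x ∈ s) => f x)
    (hf.mono (by rintro _ ⟨_, ⟨x, rfl⟩, ⟨hx, rfl⟩⟩; exact ⟨x, hx, rfl⟩)) b hb

theorem NormedField.exists_le_norm_lt_mul_norm {K : Type*} [NontriviallyNormedField K] {ξ : K}
    (hξ : 1 < ‖ξ‖) {s : ℝ} (hs : 0 < s) : ∃ a : K, a ≠ 0 ∧ s ≤ ‖a‖ ∧ ‖a‖ < s * ‖ξ‖ := by
  obtain ⟨a, ha, hlt, hge, -⟩ :=
    (normSeminorm K K).rescale_to_shell hξ (by positivity : 0 < s * ‖ξ‖) (x := 1) (by simp)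
  simp only [coe_normSeminorm, smul_eq_mul, mul_one] at hlt hge
  rw [mul_div_cancel_right₀ _ (by positivity)] at hge
  exact ⟨a, ha, hge, hlt⟩

theorem exists_eq_add_smul_of_mem_closedBall {𝕜 E : Type*} [NormedField 𝕜]
    [SeminormedAddCommGroup E] [NormedSpace 𝕜 E] {a : 𝕜} (ha : a ≠ 0) {c t : E}
    (ht : t ∈ closedBall c ‖a‖) : ∃ u ∈ closedBall (0 : E) 1, t = c + a • u := by
  refine ⟨a⁻¹ • (t - c), ?_, by rw [smul_inv_smul₀ ha, add_sub_cancel]⟩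
  rw [mem_closedBall_zero_iff, norm_smul, norm_inv, inv_mul_le_one₀ (norm_pos_iff.2 ha)]
  exact mem_closedBall_iff_norm.1 ht

namespace MvPolynomial

theorem totalDegree_bind₁_le {σ τ R : Type*} [CommSemiring R] {k : ℕ}
    {f : σ → MvPolynomial τ R} (hf : ∀ j, (f j).totalDegree ≤ k) (p : MvPolynomial σ R) :
    (bind₁ f p).totalDegree ≤ p.totalDegree * k := by
  conv_lhs => rw [p.as_sum]
  rw [map_sum]
  refine (totalDegree_finsetSum _ _).trans (Finset.sup_le fun α hα => ?_)
  rw [bind₁_monomial]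
  refine (totalDegree_mul _ _).trans ?_
  rw [totalDegree_C, zero_add]
  refine (totalDegree_finsetProd _ _).trans ?_
  calc ∑ j ∈ α.support, (f j ^ α j).totalDegree ≤ ∑ j ∈ α.support, α j * k :=
        Finset.sum_le_sum fun j _ => (totalDegree_pow _ _).trans (Nat.mul_le_mul_left _ (hf j))
    _ ≤ p.totalDegree * k := by
        rw [← Finset.sum_mul]; exact Nat.mul_le_mul_right k (le_totalDegree hα)

section AffineSubst

variable {σ R : Type*} [CommRing R]

noncomputable def affineSubst (c : σ → R) (a : R) : MvPolynomial σ R →ₐ[R] MvPolynomial σ R :=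
  bind₁ fun j => C (c j) + C a * X j

theorem eval_affineSubst (c : σ → R) (a : R) (u : σ → R) (p : MvPolynomial σ R) :
    eval u (affineSubst c a p) = eval (c + a • u) p := by
  change aeval u (bind₁ _ p) = aeval (c + a • u) p
  rw [aeval_bind₁]
  congr 2
  funext j
  simp [mul_comm]

theorem totalDegree_affineSubst_le (c : σ → R) (a : R) (p : MvPolynomial σ R) :
    (affineSubst c a p).totalDegree ≤ p.totalDegree := by
  refine (totalDegree_bind₁_le (fun j => ?_) p).trans_eq (mul_one _)
  refine (totalDegree_add _ _).trans (max_le (by simp) ?_)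
  refine (totalDegree_mul _ _).trans ?_
  rw [totalDegree_C, zero_add, X]
  exact (totalDegree_monomial_le _ _).trans (by simp)

end AffineSubst

variable {K σ ι : Type*} [NontriviallyNormedField K] [Fintype σ]

theorem norm_eval_le_of_norm_le {r : ℝ} {t : σ → K} (ht : ‖t‖ ≤ r) (P : MvPolynomial σ K) :
    ‖eval t P‖ ≤ ∑ α ∈ P.support, ‖coeff α P‖ * r ^ α.degree := by
  rw [eval_eq]
  refine (norm_sum_le _ _).trans (Finset.sum_le_sum fun α _ => ?_)
  rw [norm_mul, norm_prod, Finsupp.degree_apply, ← Finset.prod_pow_eq_pow_sum]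
  gcongr with i
  rw [norm_pow]
  gcongr
  exact (norm_le_pi_norm t i).trans ht

theorem eq_zero_of_eval_eq_zero_on_closedBall {r : ℝ} (hr : 0 < r) {P : MvPolynomial σ K}
    (h : ∀ t ∈ closedBall (0 : σ → K) r, eval t P = 0) : P = 0 := by
  obtain ⟨a, ha0, har⟩ := NormedField.exists_norm_lt K (lt_min hr one_pos)
  have ha1 : ‖a‖ < 1 := har.trans_le (min_le_right _ _)
  have hinj : Function.Injective fun k : ℕ => a ^ (k + 1) := fun m n hmn => by
    have := congrArg norm hmn
    simp only [norm_pow] at this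
    exact Nat.succ_injective ((pow_right_strictAnti₀ ha0 ha1).injective this)
  -- combinatorial Nullstellensatz on the grid `S^σ` of small points, `#S > totalDegree P`
  let S : Finset K := (Finset.range (P.totalDegree + 1)).map ⟨_, hinj⟩
  refine eq_zero_of_eval_zero_at_prod_finset P (fun _ => S) (fun i => ?_) (fun t ht => h t ?_)
  · rw [Finset.card_map, Finset.card_range]
    exact Nat.lt_succ_of_le (degreeOf_le_totalDegree P i)
  · rw [mem_closedBall_zero_iff, pi_norm_le_iff_of_nonneg hr.le]
    intro i
    obtain ⟨k, -, hk⟩ := Finset.mem_map.1 (ht i)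
    rw [← hk]
    simp only [Function.Embedding.coeFn_mk, norm_pow]
    calc ‖a‖ ^ (k + 1) ≤ ‖a‖ := pow_le_of_le_one ha0.le ha1.le k.succ_ne_zero
      _ ≤ r := har.le.trans (min_le_left _ _)

variable [Fintype ι]

theorem bddAbove_range_norm_eval (r : ℝ) (P : ι → MvPolynomial σ K) :
    BddAbove (Set.range fun t : closedBall (0 : σ → K) r => ‖fun i => eval (t : σ → K) (P i)‖) := by
  refine ⟨∑ i, ∑ α ∈ (P i).support, ‖coeff α (P i)‖ * r ^ α.degree, ?_⟩
  rintro _ ⟨⟨t, ht⟩, rfl⟩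
  have ht : ‖t‖ ≤ r := mem_closedBall_zero_iff.1 ht
  have hr : 0 ≤ r := (norm_nonneg t).trans ht
  refine (pi_norm_le_iff_of_nonneg (by positivity)).2 fun i => ?_
  exact (norm_eval_le_of_norm_le ht (P i)).trans (Finset.single_le_sum (f := fun i =>
    ∑ α ∈ (P i).support, ‖coeff α (P i)‖ * r ^ α.degree) (fun i _ => by positivity)
    (Finset.mem_univ i))

variable (ι) in
noncomputable def supNormOnClosedBall (r : ℝ) : Seminorm K (ι → MvPolynomial σ K) :=
  ⨆ t : closedBall (0 : σ → K) r,
    (normSeminorm K (ι → K)).comp (LinearMap.piMap fun _ => (aeval (t : σ → K)).toLinearMap)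

theorem supNormOnClosedBall_apply (r : ℝ) (P : ι → MvPolynomial σ K) :
    supNormOnClosedBall ι r P =
      ⨆ t : closedBall (0 : σ → K) r, ‖fun i => eval (t : σ → K) (P i)‖ :=
  Seminorm.iSup_apply (Seminorm.bddAbove_range_iff.2 fun Q => bddAbove_range_norm_eval r Q)

theorem norm_eval_le_supNormOnClosedBall {r : ℝ} {t : σ → K} (ht : t ∈ closedBall 0 r)
    (P : ι → MvPolynomial σ K) : ‖fun i => eval t (P i)‖ ≤ supNormOnClosedBall ι r P := by
  rw [supNormOnClosedBall_apply]
  exact le_ciSup (f := fun t : closedBall (0 : σ → K) r => ‖fun i => eval (t : σ → K) (P i)‖)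
    (bddAbove_range_norm_eval r P) ⟨t, ht⟩

theorem supNormOnClosedBall_le {r a : ℝ} (ha : 0 ≤ a) {P : ι → MvPolynomial σ K}
    (h : ∀ t ∈ closedBall (0 : σ → K) r, ‖fun i => eval t (P i)‖ ≤ a) :
    supNormOnClosedBall ι r P ≤ a := by
  rw [supNormOnClosedBall_apply]
  exact Real.iSup_le (fun t => h t t.2) ha

theorem eq_zero_of_supNormOnClosedBall_eq_zero {r : ℝ} (hr : 0 < r) {P : ι → MvPolynomial σ K}
    (hP : supNormOnClosedBall ι r P = 0) : P = 0 := by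
  funext i
  refine eq_zero_of_eval_eq_zero_on_closedBall hr fun t ht => norm_le_zero_iff.1 ?_
  exact (norm_le_pi_norm (fun i => eval t (P i)) i).trans
    ((norm_eval_le_supNormOnClosedBall ht P).trans hP.le)

theorem exists_supNormOnClosedBall_le_mul [CompleteSpace K] (d : ℕ) (r : ℝ) {ρ : ℝ}
    (hρ : 0 < ρ) :
    ∃ C, 0 ≤ C ∧ ∀ P : ι → MvPolynomial σ K, (∀ i, (P i).totalDegree ≤ d) →
      supNormOnClosedBall ι r P ≤ C * supNormOnClosedBall ι ρ P := by
  let L : (ι → restrictTotalDegree σ K d) →ₗ[K] ι → MvPolynomial σ K :=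
    LinearMap.piMap fun _ => (restrictTotalDegree σ K d).subtype
  obtain ⟨C, hC, hle⟩ := Seminorm.exists_le_mul_of_finiteDimensional
    ((supNormOnClosedBall ι r).comp L) ((supNormOnClosedBall ι ρ).comp L) fun P hP =>
      _root_.funext fun i => Subtype.ext (congrFun (eq_zero_of_supNormOnClosedBall_eq_zero hρ hP) i)
  exact ⟨C, hC, fun P hP => hle fun i => ⟨P i, (mem_restrictTotalDegree _ _ _).2 (hP i)⟩⟩

theorem norm_eval_le_supNormOnClosedBall_affineSubst {a : K} (ha : a ≠ 0) {c t : σ → K}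
    (ht : t ∈ closedBall c ‖a‖) (P : ι → MvPolynomial σ K) :
    ‖fun i => eval t (P i)‖ ≤ supNormOnClosedBall ι 1 fun i => affineSubst c a (P i) := by
  obtain ⟨u, hu, rfl⟩ := exists_eq_add_smul_of_mem_closedBall ha ht
  simp only [← eval_affineSubst]
  exact norm_eval_le_supNormOnClosedBall hu _

theorem supNormOnClosedBall_affineSubst_le {a : K} {c : σ → K} {ρ s : ℝ} (hs : ‖a‖ * ρ ≤ s)
    {P : ι → MvPolynomial σ K}
    (hP : BddAbove ((fun t => ‖fun i => eval t (P i)‖) '' closedBall c s)) :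
    supNormOnClosedBall ι ρ (fun i => affineSubst c a (P i)) ≤
      ⨆ t ∈ closedBall c s, ‖fun i => eval t (P i)‖ := by
  refine supNormOnClosedBall_le (Real.iSup_nonneg fun _ => Real.iSup_nonneg fun _ =>
    norm_nonneg _) fun u hu => ?_
  simp only [eval_affineSubst]
  refine le_biSup_of_bddAbove_image (f := fun t => ‖fun i => eval t (P i)‖) hP ?_
  rw [mem_closedBall, dist_self_add_left, norm_smul]
  exact (mul_le_mul_of_nonneg_left (mem_closedBall_zero_iff.1 hu) (norm_nonneg a)).trans hs

end MvPolynomial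

theorem polymap_sup_comparison_on_subball_general
    {K : Type*} [NontriviallyNormedField K]
    [CompleteSpace K]
    (N M d : ℕ)
    (η : ℝ) (hη₀ : 0 < η) :
    ∃ R : ℝ, 1 < R ∧
      ∀ (c₀ c : Fin N → K) (r₀ r : ℝ), 0 < r₀ → 0 < r →
        closedBall c₀ r₀ ⊆ closedBall c r → η * r ≤ r₀ →
        ∀ F : (Fin N → K) → (Fin M → K), IsPolyMapOfDeg K N M d F →
          (⨆ t ∈ closedBall c r, ‖F t‖) ≤ R * ⨆ t ∈ closedBall c₀ r₀, ‖F t‖ :=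
  open MvPolynomial in by
  obtain ⟨ξ, hξ⟩ := NormedField.exists_one_lt_norm K
  obtain ⟨C, hC, hcomp⟩ := exists_supNormOnClosedBall_le_mul (σ := Fin N) (ι := Fin M) (K := K)
    d 1 (ρ := η / (2 * ‖ξ‖)) (by positivity)
  refine ⟨C + 2, by linarith, fun c₀ c r₀ r hr₀ hr hsub hηr F ⟨P, hPdeg, hFP⟩ => ?_⟩
  obtain rfl : F = fun t i => eval t (P i) := funext₂ hFP
  obtain ⟨a, ha, ha_ge, ha_lt⟩ :=
    NormedField.exists_le_norm_lt_mul_norm hξ (by positivity : 0 < 2 * r)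
  have hc₀ : dist c₀ c ≤ r := hsub (mem_closedBall_self hr₀.le)
  have hball : closedBall c r ⊆ closedBall c₀ ‖a‖ :=
    closedBall_subset_closedBall' (by rw [dist_comm]; linarith)
  have haρ : ‖a‖ * (η / (2 * ‖ξ‖)) ≤ r₀ := by
    calc ‖a‖ * (η / (2 * ‖ξ‖)) ≤ 2 * r * ‖ξ‖ * (η / (2 * ‖ξ‖)) := by gcongr
      _ = η * r := by field_simp
      _ ≤ r₀ := hηr
  have hcover := fun t (ht : t ∈ closedBall c₀ ‖a‖) =>
    norm_eval_le_supNormOnClosedBall_affineSubst ha ht P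
  have hsmall := supNormOnClosedBall_affineSubst_le haρ
    ⟨_, by rintro _ ⟨t, ht, rfl⟩; exact hcover t (hball (hsub ht))⟩
  calc (⨆ t ∈ closedBall c r, ‖fun i => eval t (P i)‖)
      ≤ supNormOnClosedBall (Fin M) 1 fun i => affineSubst c₀ a (P i) :=
        Real.iSup_le (fun t => Real.iSup_le (fun ht => hcover t (hball ht)) (by positivity))
          (by positivity)
    _ ≤ C * supNormOnClosedBall (Fin M) (η / (2 * ‖ξ‖)) fun i => affineSubst c₀ a (P i) :=
        hcomp _ fun i => (totalDegree_affineSubst_le c₀ a (P i)).trans (hPdeg i)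
    _ ≤ (C + 2) * ⨆ t ∈ closedBall c₀ r₀, ‖fun i => eval t (P i)‖ := by
        gcongr; linarith

/-- Over a nonarchimedean local field `K`: given `η ∈ (0,1)` there is `R > 1`, depending
only on `N, M, d, η` and `K`, such that whenever `B₀ ⊆ B` are balls in `K^N` of radii
`r₀` and `r` with `r₀ ≥ η·r`, one has `sup_B |F| ≤ R · sup_{B₀} |F|` for every polynomial
map `F : K^N → K^M` of degree at most `d`. -/
theorem polymap_sup_comparison_on_subball
    {K : Type*} [NontriviallyNormedField K] [IsUltrametricDist K]
    [CompleteSpace K] [LocallyCompactSpace K]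
    (N M d : ℕ) (hN : 0 < N) (hM : 0 < M) (hd : 0 < d)
    (η : ℝ) (hη₀ : 0 < η) (hη₁ : η < 1) :
    ∃ R : ℝ, 1 < R ∧
      ∀ (c₀ c : Fin N → K) (r₀ r : ℝ), 0 < r₀ → 0 < r →
        closedBall c₀ r₀ ⊆ closedBall c r → η * r ≤ r₀ →
        ∀ F : (Fin N → K) → (Fin M → K), IsPolyMapOfDeg K N M d F →
          (⨆ t ∈ closedBall c r, ‖F t‖) ≤ R * ⨆ t ∈ closedBall c₀ r₀, ‖F t‖ :=
  polymap_sup_comparison_on_subball_general N M d η hη₀
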